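/- For every Kripke model 𝒦 = (W, ⊏, V) there is a provability model 𝒫 = (W, ⊏, {T_w}, V) on the same frame and valuation such that for every modal formula A and every world w, 𝒦, w ⊨ A iff 𝒫, w ⊩ A. Specifically, taking T_w with axioms {A : 𝒦, w ⊨ A} and modus ponens as only rule yields such a provability model. -/

import Mathlib

/-- Formulas of the modal language with atoms, ⊥, → and □. -/
inductive Fml : Type
  | atom : ℕ → Fml
  | bot  : Fml
  | imp  : Fml → Fml → Fml
  | box  : Fml → Fml
deriving DecidableEq

/-- Classical Boolean evaluation where boxed formulas behave like atoms:
the valuation `v` is queried on atoms and on boxed formulas. -/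
def evalCL (v : Fml → Bool) : Fml → Bool
  | .atom n => v (.atom n)
  | .bot => false
  | .imp A B => !(evalCL v A) || evalCL v B
  | .box A => v (.box A)

/-- Classical tautology over the modal language (□-formulas act as atoms). -/
def Taut (A : Fml) : Prop := ∀ v, evalCL v A = true

/-- A formula is purely modal if every atom is in the scope of some □. -/
def PurelyModal : Fml → Prop
  | .atom _ => False
  | .bot => True
  | .imp A B => PurelyModal A ∧ PurelyModal B
  | .box _ => True

/-- A provability pre-model: a frame, a theory (given by its set of
derivable formulas) at each world, and a valuation. -/
structure PModel (W : Type*) where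
  R : W → W → Prop
  T : W → Set Fml
  V : W → ℕ → Prop

/-- Forcing in a provability pre-model. -/
def pforce {W : Type*} (P : PModel W) : W → Fml → Prop
  | w, .atom n => P.V w n
  | _, .bot => False
  | w, .imp A B => pforce P w A → pforce P w B
  | w, .box A => ∀ u, P.R w u → A ∈ P.T u

/-- `𝒫, w ⊩⁺ A` iff some predecessor `u ⊏ w` has `𝒫, v ⊩ A` for all `v ⊐⁺ u`. -/
def pforcePlus {W : Type*} (P : PModel W) (w : W) (A : Fml) : Prop :=
  ∃ u, P.R u w ∧ ∀ v, Relation.TransGen P.R u v → pforce P v A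

/-- A world is ⊏-accessible if it has a ⊏-predecessor. -/
def Accessible {W : Type*} (P : PModel W) (w : W) : Prop := ∃ v, P.R v w

/-- A classical theory: contains all classical tautologies and is closed
under modus ponens. -/
def IsClassicalTheory (T : Set Fml) : Prop :=
  (∀ A, Taut A → A ∈ T) ∧ (∀ A B, Fml.imp A B ∈ T → A ∈ T → B ∈ T)

/-- Provability model: classical theories at accessible worlds and modal
completeness. -/
def IsPModel {W : Type*} (P : PModel W) : Prop :=
  (∀ w, Accessible P w → IsClassicalTheory (P.T w)) ∧
  (∀ w A, PurelyModal A → pforcePlus P w A → A ∈ P.T w)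

/-- A Kripke model. -/
structure KModel (W : Type*) where
  R : W → W → Prop
  V : W → ℕ → Prop

/-- Kripke forcing. -/
def kforce {W : Type*} (K : KModel W) : W → Fml → Prop
  | w, .atom n => K.V w n
  | _, .bot => False
  | w, .imp A B => kforce K w A → kforce K w B
  | w, .box A => ∀ u, K.R w u → kforce K u A


open Classical in
lemma eval_kforce {W : Type*} (K : KModel W) (w : W) (A : Fml) :
    evalCL (fun B => decide (kforce K w B)) A = true ↔ kforce K w A := by
  induction A with
  | atom n => simp [evalCL, kforce]; exact decide_eq_true_iff
  | bot => simp [evalCL, kforce]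
  | imp A B ihA ihB =>
      simp only [evalCL, kforce, ← ihA, ← ihB, Bool.or_eq_true, Bool.not_eq_true']
      by_cases h : evalCL (fun B => decide (kforce K w B)) A = true <;> simp [h]
  | box A ih => simp [evalCL, kforce]; exact decide_eq_true_iff

lemma taut_kforce {W : Type*} (K : KModel W) (w : W) (A : Fml) (h : Taut A) :
    kforce K w A := (eval_kforce K w A).mp (h _)

/-- For every Kripke model `𝒦` there is a provability model on the same frame
and valuation, equivalent to `𝒦`: taking as theory at `w` the set of formulas
valid at `w` (closed under modus ponens only) works. -/
theorem kripke_to_provability_model {W : Type*} (K : KModel W) (P : PModel W)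
    (hP : P = ⟨K.R, fun w => {A | kforce K w A}, K.V⟩) :
    IsPModel P ∧ ∀ w A, kforce K w A ↔ pforce P w A := by
  subst hP
  have equiv : ∀ A (w : W), kforce K w A ↔ pforce (PModel.mk K.R (fun w => {A | kforce K w A}) K.V) w A := by
    intro A
    induction A with
    | atom n => intro w; exact Iff.rfl
    | bot => intro w; exact Iff.rfl
    | imp A B ihA ihB =>
        intro w
        simp only [kforce, pforce]
        rw [ihA w, ihB w]
    | box A ih =>
        intro w
        simp only [kforce, pforce]
        rfl
  refine ⟨⟨?_, ?_⟩, fun w A => equiv A w⟩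
  · intro w _
    exact ⟨fun A hA => taut_kforce K w A hA, fun A B hAB hA => hAB hA⟩
  · intro w A _ ⟨u, hu, hv⟩
    exact (equiv A w).mpr (hv w (Relation.TransGen.single hu))
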